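/- For every γ ∈ [0,2] there exists a constant C = C(γ) > 0, independent of n, τ and ι, such that for every integer n ≥ 2, every τ > 0, and every integer ι ≥ 1: max_{1 ≤ k ≤ n-1} (-λ_{k,n})^γ (1 + τ λ_{k,n}²)^{-ι} ≤ C (ι τ)^{-γ/2}; equivalently, the spectral norm of (-A_n)^γ (I + τ A_n²)^{-ι} is bounded by C (ι τ)^{-γ/2}. -/
import Mathlib


noncomputable section

open Real

/-- The eigenvalue `λ_{k,n} = -(4n²/π²) sin²(kπ/(2n))` of the discrete Dirichlet
Laplacian matrix `A_n`. -/
def lamEig (k n : ℕ) : ℝ :=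
  -(4 * (n : ℝ) ^ 2 / Real.pi ^ 2) * Real.sin ((k : ℝ) * Real.pi / (2 * n)) ^ 2

/-- `t^s ≤ 1 + t` for `t ≥ 0`, `s ∈ [0,1]`. -/
lemma rpow_le_one_add (t s : ℝ) (ht : 0 ≤ t) (hs0 : 0 ≤ s) (hs1 : s ≤ 1) :
    t ^ s ≤ 1 + t := by
  rcases le_total t 1 with h | h
  · have := Real.rpow_le_one ht h hs0
    linarith
  · calc t ^ s ≤ t ^ (1 : ℝ) := Real.rpow_le_rpow_of_exponent_le h hs1
    _ = t := Real.rpow_one t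
    _ ≤ 1 + t := by linarith

/-- For every `γ ∈ [0,2]` there is `C = C(γ) > 0`, independent of `n`, `τ`, `ι`, such that
for every `n ≥ 2`, `τ > 0` and integer `ι ≥ 1`:
`max_{1≤k≤n-1} (-λ_{k,n})^γ (1 + τλ_{k,n}²)^{-ι} ≤ C (ιτ)^{-γ/2}`, stated here as a bound
for every `k ∈ {1,…,n-1}` (equivalently, the spectral norm of `(-A_n)^γ (I+τA_n²)^{-ι}` is
bounded by `C (ιτ)^{-γ/2}`). -/
theorem stmt10 (γ : ℝ) (hγ : γ ∈ Set.Icc (0 : ℝ) 2) :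
    ∃ C : ℝ, 0 < C ∧ ∀ n : ℕ, 2 ≤ n → ∀ τ : ℝ, 0 < τ → ∀ ι : ℕ, 1 ≤ ι →
      ∀ k : ℕ, 1 ≤ k → k ≤ n - 1 →
        (-(lamEig k n)) ^ γ * ((1 + τ * (lamEig k n) ^ 2) ^ ι)⁻¹
          ≤ C * ((ι : ℝ) * τ) ^ (-γ / 2) := by
  obtain ⟨hγ0, hγ2⟩ := hγ
  refine ⟨1, one_pos, fun n hn τ hτ ι hι k hk1 hk2 => ?_⟩
  set μ : ℝ := -(lamEig k n) with hμdef
  have hπ : (0 : ℝ) < Real.pi := Real.pi_pos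
  have hn0 : (0 : ℝ) < n := by positivity
  -- sin argument is in (0, π)
  have hθpos : 0 < (k : ℝ) * Real.pi / (2 * n) := by
    have : (0:ℝ) < (k:ℝ) := by exact_mod_cast hk1
    positivity
  have hθlt : (k : ℝ) * Real.pi / (2 * n) < Real.pi := by
    rw [div_lt_iff₀ (by positivity)]
    have hkn : (k : ℝ) < 2 * n := by
      have : k < 2 * n := by omega
      exact_mod_cast this
    nlinarith
  have hsin : 0 < Real.sin ((k : ℝ) * Real.pi / (2 * n)) :=
    Real.sin_pos_of_pos_of_lt_pi hθpos hθlt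
  have hμ : 0 < μ := by
    have : μ = (4 * (n : ℝ) ^ 2 / Real.pi ^ 2) *
        Real.sin ((k : ℝ) * Real.pi / (2 * n)) ^ 2 := by
      simp [hμdef, lamEig]
    rw [this]; positivity
  have hlam2 : (lamEig k n) ^ 2 = μ ^ 2 := by rw [hμdef]; ring
  rw [hlam2]
  have hb : (0 : ℝ) < (1 + τ * μ ^ 2) ^ ι := by positivity
  have hιpos : (0 : ℝ) < (ι : ℝ) := by exact_mod_cast hι
  have hc : (0 : ℝ) < ((ι : ℝ) * τ) ^ (γ / 2) := Real.rpow_pos_of_pos (by positivity) _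
  -- key inequality
  have key : ((ι : ℝ) * τ) ^ (γ / 2) * μ ^ γ ≤ (1 + τ * μ ^ 2) ^ ι := by
    have hμγ : μ ^ γ = (μ ^ 2) ^ (γ / 2) := by
      rw [← Real.rpow_natCast μ 2, ← Real.rpow_mul hμ.le]
      congr 1; ring
    rw [hμγ, ← Real.mul_rpow (by positivity) (by positivity)]
    have h1 : ((ι : ℝ) * τ * μ ^ 2) ^ (γ / 2) ≤ 1 + (ι : ℝ) * τ * μ ^ 2 :=
      rpow_le_one_add _ _ (by positivity) (by linarith) (by linarith)
    have h2 : 1 + (ι : ℝ) * (τ * μ ^ 2) ≤ (1 + τ * μ ^ 2) ^ ι :=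
      one_add_mul_le_pow (by nlinarith) ι
    calc ((ι : ℝ) * τ * μ ^ 2) ^ (γ / 2) ≤ 1 + (ι : ℝ) * τ * μ ^ 2 := h1
      _ = 1 + (ι : ℝ) * (τ * μ ^ 2) := by ring
      _ ≤ (1 + τ * μ ^ 2) ^ ι := h2
  have hrw : (1 : ℝ) * ((ι : ℝ) * τ) ^ (-γ / 2) = (((ι : ℝ) * τ) ^ (γ / 2))⁻¹ := by
    rw [one_mul, neg_div, Real.rpow_neg (by positivity)]
  rw [hrw]
  rw [mul_inv_le_iff₀ hb, inv_mul_eq_div, le_div_iff₀ hc]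
  nlinarith [Real.rpow_nonneg hμ.le γ]
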